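/- arXiv:2301.03149 — 5 statements merged into one kernel-verified Lean document; each statement's English description precedes it below -/
import Mathlib

section
/- For every natural number n, any set of n distinct lines divides the plane into at most n(n+1)/2 + 1 regions; that is, if L is a finite set of n lines in ℝ², then the number of connected components of the complement ℝ² \ ⋃_{ℓ∈L} ℓ is at most n(n+1)/2 + 1. -/
/-!
Each line is the zero set of an affine functional. Points off the lines at which every functional
has the same sign form a convex cell, which lies in a single region, so it suffices to count the
sign patterns realised off the lines. A pattern of a family that is realised on both sides of a
new line `ℓ` is, by convexity of its cell, also realised on `ℓ`; hence adding `ℓ` increases the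
count by at most the number of patterns realised on `ℓ`. On a line the same argument, with points
in place of lines, bounds this by `k + 1` for `k` functionals, and summing gives
`1 + ∑_{k<n} (k + 1) = n(n+1)/2 + 1`.
-/

/-- A line in the plane: a 1-dimensional affine subspace of `ℝ × ℝ`,
described as `{a + t • v : t ∈ ℝ}` for some point `a` and nonzero direction `v`. -/
def IsLine (L : Set (ℝ × ℝ)) : Prop :=
  ∃ a v : ℝ × ℝ, v ≠ 0 ∧ L = {p | ∃ t : ℝ, p = a + t • v}

open Set

lemma mul_pos_iff_pos_iff_pos {u w : ℝ} (hu : u ≠ 0) (hw : w ≠ 0) :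
    0 < u * w ↔ (0 < u ↔ 0 < w) := by
  rcases hu.lt_or_gt with hu | hu <;> rcases hw.lt_or_gt with hw | hw <;>
    simp [mul_pos_iff, hu, hw, hu.le, hw.le, not_lt.mpr]

lemma AffineMap.exists_eq_zero_of_convex {E : Type*} [AddCommGroup E] [Module ℝ E]
    {g : E →ᵃ[ℝ] ℝ} {C : Set E} (hC : Convex ℝ C) {p q : E} (hp : p ∈ C) (hq : q ∈ C)
    (hgp : g p < 0) (hgq : 0 < g q) : ∃ r ∈ C, g r = 0 := by
  have hd : 0 < g q - g p := by linarith
  refine ⟨(g q / (g q - g p)) • p + (-g p / (g q - g p)) • q,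
    hC hp hq (by positivity) (div_nonneg (by linarith) hd.le) (by field_simp; ring), ?_⟩
  rw [Convex.combo_affine_apply (by field_simp; ring), smul_eq_mul, smul_eq_mul]
  field_simp
  ring

lemma AffineMap.zeros_subsingleton_of_ne_zero {V : Type*} [AddCommGroup V] [Module ℝ V]
    {g : ℝ →ᵃ[ℝ] V} {t₀ : ℝ} (ht₀ : g t₀ ≠ 0) : {t | g t = 0}.Subsingleton := by
  intro t₁ h₁ t₂ h₂
  by_contra hne
  have hd : t₂ - t₁ ≠ 0 := sub_ne_zero.mpr (Ne.symm hne)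
  apply ht₀
  have ht : AffineMap.lineMap t₁ t₂ ((t₀ - t₁) / (t₂ - t₁)) = t₀ := by
    rw [AffineMap.lineMap_apply_ring']
    field_simp
    ring
  rw [← ht, AffineMap.apply_lineMap, h₁, h₂, AffineMap.lineMap_same_apply]

lemma ConnectedComponents.coe_eq_coe_of_isPreconnected {X : Type*} [TopologicalSpace X]
    {U s : Set X} (hs : IsPreconnected s) (hsU : s ⊆ U) {x y : U} (hx : (x : X) ∈ s)
    (hy : (y : X) ∈ s) : (x : ConnectedComponents U) = y := by
  have hpre : IsPreconnected (Subtype.val ⁻¹' s : Set U) := by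
    rwa [← Topology.IsInducing.subtypeVal.isPreconnected_image, Subtype.image_preimage_coe,
      inter_eq_right.mpr hsU]
  exact ConnectedComponents.coe_eq_coe'.mpr (hpre.subset_connectedComponent hy hx)

lemma ConnectedComponents.finite_and_card_le_ncard_range {α β : Type*} [TopologicalSpace α]
    (φ : α → β) (hφ : ∀ x y, φ x = φ y → (x : ConnectedComponents α) = y)
    (hfin : (range φ).Finite) :
    Finite (ConnectedComponents α) ∧ Nat.card (ConnectedComponents α) ≤ (range φ).ncard := by
  have hs := ConnectedComponents.surjective_coe (α := α)
  let g : ConnectedComponents α → range φ :=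
    fun c => ⟨φ (Function.surjInv hs c), mem_range_self _⟩
  have hg : Function.Injective g := fun c c' h => by
    rw [← Function.surjInv_eq hs c, ← Function.surjInv_eq hs c']
    exact hφ _ _ (congrArg Subtype.val h)
  have := hfin.to_subtype
  exact ⟨Finite.of_injective g hg, Nat.card_le_card_of_injective g hg⟩

namespace Arrangement

variable {ι E : Type*} [AddCommGroup E] [Module ℝ E]

def offZeros (f : ι → E →ᵃ[ℝ] ℝ) (S : Finset ι) : Set E :=
  {p | ∀ j ∈ S, f j p ≠ 0}

/-- The indices of `S` on whose positive side `p` lies: off the zero sets of `f`, this determines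
all the signs. -/
def signPattern (f : ι → E →ᵃ[ℝ] ℝ) (S : Finset ι) (p : E) : Set ι :=
  {j | j ∈ S ∧ 0 < f j p}

def signPatterns (f : ι → E →ᵃ[ℝ] ℝ) (S : Finset ι) (X : Set E) : Set (Set ι) :=
  signPattern f S '' (X ∩ offZeros f S)

def cell (f : ι → E →ᵃ[ℝ] ℝ) (S : Finset ι) (σ : Set ι) : Set E :=
  {p | p ∈ offZeros f S ∧ signPattern f S p = σ}

variable {f : ι → E →ᵃ[ℝ] ℝ} {S : Finset ι}

lemma signPattern_eq_iff {p q : E} (hp : p ∈ offZeros f S) (hq : q ∈ offZeros f S) :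
    signPattern f S p = signPattern f S q ↔ ∀ j ∈ S, 0 < f j p * f j q := by
  simp only [signPattern, Set.ext_iff, mem_ofPred_eq]
  refine ⟨fun h j hj => ?_, fun h j => and_congr_right fun hj => ?_⟩
  · exact (mul_pos_iff_pos_iff_pos (hp j hj) (hq j hj)).mpr (by simpa [hj] using h j)
  · exact (mul_pos_iff_pos_iff_pos (hp j hj) (hq j hj)).mp (h j hj)

lemma convex_cell (σ : Set ι) : Convex ℝ (cell f S σ) := by
  rintro x ⟨hx, rfl⟩ y ⟨hy, hxy⟩ a b ha hb hab
  have hpos : ∀ j ∈ S, 0 < f j (a • x + b • y) * f j x := by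
    intro j hj
    have hyx := (signPattern_eq_iff hy hx).mp hxy j hj
    have hxx := mul_self_pos.mpr (hx j hj)
    rw [Convex.combo_affine_apply hab, smul_eq_mul, smul_eq_mul]
    rcases ha.eq_or_lt with rfl | ha
    · rw [zero_add] at hab; subst hab; simpa using hyx
    · nlinarith [mul_nonneg hb hyx.le]
  have hz : a • x + b • y ∈ offZeros f S := fun j hj => left_ne_zero_of_mul (hpos j hj).ne'
  exact ⟨hz, (signPattern_eq_iff hz hx).mpr hpos⟩

lemma signPatterns_finite (X : Set E) : (signPatterns f S X).Finite :=
  S.finite_toSet.finite_subsets.subset <| by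
    rintro _ ⟨p, -, rfl⟩ j hj
    exact hj.1

lemma signPatterns_mono {X Y : Set E} (h : X ⊆ Y) : signPatterns f S X ⊆ signPatterns f S Y :=
  image_mono (inter_subset_inter_left _ h)

lemma signPatterns_image {F : Type*} [AddCommGroup F] [Module ℝ F] (φ : F →ᵃ[ℝ] E) (X : Set F) :
    signPatterns f S (φ '' X) = signPatterns (fun j => (f j).comp φ) S X := by
  simp only [signPatterns, ← image_inter_preimage, image_image]
  rfl

lemma ncard_signPatterns_le_one_of_subsingleton {X : Set E} (hX : X.Subsingleton) :
    (signPatterns f S X).ncard ≤ 1 :=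
  (ncard_le_one (signPatterns_finite X)).mpr fun _ ha _ hb =>
    (hX.anti inter_subset_left).image _ ha hb

lemma ncard_signPatterns_empty_le_one (X : Set E) :
    (signPatterns f (∅ : Finset ι) X).ncard ≤ 1 := by
  refine (ncard_le_one (signPatterns_finite X)).mpr ?_
  rintro _ ⟨p, -, rfl⟩ _ ⟨q, -, rfl⟩
  simp [signPattern]

lemma ncard_signPatterns_insert_le [DecidableEq ι] {X : Set E} (hX : Convex ℝ X) (i : ι) :
    (signPatterns f (insert i S) X).ncard ≤
      (signPatterns f S X).ncard + (signPatterns f S (X ∩ {p | f i p = 0})).ncard := by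
  set N := signPatterns f S (X ∩ {p | f i p < 0})
  set P := signPatterns f S (X ∩ {p | 0 < f i p})
  have hsplit : signPatterns f (insert i S) X ⊆ N ∪ insert i '' P := by
    rintro _ ⟨p, ⟨hpX, hp⟩, rfl⟩
    have hpS : p ∈ offZeros f S := fun j hj => hp j (Finset.mem_insert_of_mem hj)
    rcases (hp i (Finset.mem_insert_self i S)).lt_or_gt with hneg | hpos
    · refine Or.inl ⟨p, ⟨⟨hpX, hneg⟩, hpS⟩, ?_⟩
      ext j
      by_cases hji : j = i
      · subst hji; simp [signPattern, hneg.not_gt]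
      · simp [signPattern, hji]
    · refine Or.inr ⟨_, ⟨p, ⟨⟨hpX, hpos⟩, hpS⟩, rfl⟩, ?_⟩
      ext j
      by_cases hji : j = i
      · subst hji; simp [signPattern, hpos]
      · simp [signPattern, hji]
  have hunion : N ∪ P ⊆ signPatterns f S X :=
    union_subset (signPatterns_mono inter_subset_left) (signPatterns_mono inter_subset_left)
  have hinter : N ∩ P ⊆ signPatterns f S (X ∩ {p | f i p = 0}) := by
    rintro σ ⟨⟨p, ⟨⟨hpX, hneg⟩, hp⟩, hpσ⟩, ⟨q, ⟨⟨hqX, hpos⟩, hq⟩, hqσ⟩⟩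
    obtain ⟨r, ⟨hrX, hr, hrσ⟩, hr0⟩ := AffineMap.exists_eq_zero_of_convex
      (hX.inter (convex_cell σ)) ⟨hpX, hp, hpσ⟩ ⟨hqX, hq, hqσ⟩ hneg hpos
    exact ⟨r, ⟨⟨hrX, hr0⟩, hr⟩, hrσ⟩
  calc (signPatterns f (insert i S) X).ncard
      ≤ (N ∪ insert i '' P).ncard := ncard_le_ncard hsplit (signPatterns_finite _ |>.union <|
        (signPatterns_finite _).image _)
    _ ≤ N.ncard + P.ncard :=
        (ncard_union_le _ _).trans (Nat.add_le_add_left (ncard_image_le (signPatterns_finite _)) _)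
    _ = (N ∪ P).ncard + (N ∩ P).ncard :=
        (ncard_union_add_ncard_inter _ _ (signPatterns_finite _) (signPatterns_finite _)).symm
    _ ≤ _ := Nat.add_le_add (ncard_le_ncard hunion (signPatterns_finite _))
        (ncard_le_ncard hinter (signPatterns_finite _))

theorem ncard_signPatterns_real_le [DecidableEq ι] (f : ι → ℝ →ᵃ[ℝ] ℝ) (S : Finset ι) :
    (signPatterns f S univ).ncard ≤ S.card + 1 := by
  induction S using Finset.induction_on with
  | empty => simpa using ncard_signPatterns_empty_le_one (f := f) univ
  | insert i S hi ih =>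
    rw [Finset.card_insert_of_notMem hi]
    by_cases hzero : ∀ t, f i t = 0
    · have hempty : offZeros f (insert i S) = ∅ :=
        eq_empty_of_forall_notMem fun t ht => ht i (Finset.mem_insert_self i S) (hzero t)
      simp [signPatterns, hempty]
    · obtain ⟨t₀, ht₀⟩ := not_forall.mp hzero
      have hline : (signPatterns f S (univ ∩ {t | f i t = 0})).ncard ≤ 1 :=
        ncard_signPatterns_le_one_of_subsingleton
          ((AffineMap.zeros_subsingleton_of_ne_zero ht₀).anti inter_subset_right)
      linarith [ncard_signPatterns_insert_le (f := f) (S := S) convex_univ i]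

theorem ncard_signPatterns_le_of_zeros_eq_range [DecidableEq ι] (f : ι → E →ᵃ[ℝ] ℝ)
    (S : Finset ι) (hf : ∀ i ∈ S, ∃ φ : ℝ →ᵃ[ℝ] E, range φ = {p | f i p = 0}) :
    (signPatterns f S univ).ncard ≤ S.card * (S.card + 1) / 2 + 1 := by
  induction S using Finset.induction_on with
  | empty => simpa using ncard_signPatterns_empty_le_one (f := f) univ
  | insert i S hi ih =>
    obtain ⟨φ, hφ⟩ := hf i (Finset.mem_insert_self i S)
    have hline : (signPatterns f S (univ ∩ {p | f i p = 0})).ncard ≤ S.card + 1 := by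
      rw [univ_inter, ← hφ, ← image_univ, signPatterns_image]
      exact ncard_signPatterns_real_le _ S
    have hstep := ncard_signPatterns_insert_le (f := f) (S := S) convex_univ i
    have hS := ih fun j hj => hf j (Finset.mem_insert_of_mem hj)
    have harith :
        (S.card + 1) * (S.card + 1 + 1) / 2 = S.card * (S.card + 1) / 2 + (S.card + 1) := by
      rw [show (S.card + 1) * (S.card + 1 + 1) = S.card * (S.card + 1) + 2 * (S.card + 1) by ring,
        Nat.add_mul_div_left _ _ two_pos]
    rw [Finset.card_insert_of_notMem hi, harith]
    omega

theorem connectedComponents_offZeros_finite_and_card_le [TopologicalSpace E] [ContinuousAdd E]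
    [ContinuousSMul ℝ E] [DecidableEq ι] (f : ι → E →ᵃ[ℝ] ℝ) (S : Finset ι)
    (hf : ∀ i ∈ S, ∃ φ : ℝ →ᵃ[ℝ] E, range φ = {p | f i p = 0}) :
    Finite (ConnectedComponents (offZeros f S)) ∧
      Nat.card (ConnectedComponents (offZeros f S)) ≤ S.card * (S.card + 1) / 2 + 1 := by
  have hrange : range (signPattern f S ∘ Subtype.val : offZeros f S → Set ι) =
      signPatterns f S univ := by
    rw [range_comp, Subtype.range_coe, signPatterns, univ_inter]
  have hsame : ∀ x y : offZeros f S, signPattern f S x = signPattern f S y →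
      (x : ConnectedComponents (offZeros f S)) = y := fun x y hxy =>
    ConnectedComponents.coe_eq_coe_of_isPreconnected (convex_cell _).isPreconnected
      (fun _ hp => hp.1) ⟨x.2, hxy⟩ ⟨y.2, rfl⟩
  obtain ⟨hfin, hcard⟩ := ConnectedComponents.finite_and_card_le_ncard_range _ hsame
    (hrange ▸ signPatterns_finite univ)
  exact ⟨hfin, hcard.trans (hrange ▸ ncard_signPatterns_le_of_zeros_eq_range f S hf)⟩

end Arrangement

def lineEquation (a v : ℝ × ℝ) : ℝ × ℝ →ᵃ[ℝ] ℝ where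
  toFun p := v.2 * (p.1 - a.1) - v.1 * (p.2 - a.2)
  linear := v.2 • LinearMap.fst ℝ ℝ ℝ - v.1 • LinearMap.snd ℝ ℝ ℝ
  map_vadd' p w := by simp; ring

lemma lineEquation_eq_zero_iff {a v : ℝ × ℝ} (hv : v ≠ 0) (p : ℝ × ℝ) :
    lineEquation a v p = 0 ↔ ∃ t : ℝ, p = a + t • v := by
  obtain ⟨v₁, v₂⟩ := v
  obtain ⟨p₁, p₂⟩ := p
  obtain ⟨a₁, a₂⟩ := a
  have hN : v₁ ^ 2 + v₂ ^ 2 ≠ 0 := by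
    intro h
    apply hv
    simp only [Prod.mk_eq_zero]
    constructor <;> nlinarith
  simp only [lineEquation, AffineMap.coe_mk, Prod.ext_iff, Prod.fst_add, Prod.snd_add,
    Prod.smul_fst, Prod.smul_snd, smul_eq_mul]
  constructor
  · intro h
    refine ⟨(v₁ * (p₁ - a₁) + v₂ * (p₂ - a₂)) / (v₁ ^ 2 + v₂ ^ 2), ?_, ?_⟩ <;> field_simp
    · linear_combination v₂ * h
    · linear_combination -v₁ * h
  · rintro ⟨t, rfl, rfl⟩
    ring

lemma IsLine.exists_zeros_eq_and_range_eq {ℓ : Set (ℝ × ℝ)} (h : IsLine ℓ) :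
    ∃ g : ℝ × ℝ →ᵃ[ℝ] ℝ, {p | g p = 0} = ℓ ∧ ∃ φ : ℝ →ᵃ[ℝ] ℝ × ℝ, range φ = ℓ := by
  obtain ⟨a, v, hv, rfl⟩ := h
  refine ⟨lineEquation a v, Set.ext (lineEquation_eq_zero_iff hv), AffineMap.lineMap a (a + v), ?_⟩
  ext p
  simp [AffineMap.lineMap_apply_module', eq_comm, add_comm]

/-- Any set of `n` distinct lines divides the plane into at most `n(n+1)/2 + 1` regions:
the complement of their union has finitely many connected components, and the number of
connected components is at most `n(n+1)/2 + 1`. -/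
theorem lines_divide_plane_le (n : ℕ) (L : Finset (Set (ℝ × ℝ)))
    (hcard : L.card = n) (hline : ∀ ℓ ∈ L, IsLine ℓ) :
    Finite (ConnectedComponents ↥((⋃ ℓ ∈ L, ℓ)ᶜ)) ∧
      Nat.card (ConnectedComponents ↥((⋃ ℓ ∈ L, ℓ)ᶜ)) ≤ n * (n + 1) / 2 + 1 := by
  classical
  choose! g hg φ hφ using fun ℓ hℓ => (hline ℓ hℓ).exists_zeros_eq_and_range_eq
  have hU : (⋃ ℓ ∈ L, ℓ)ᶜ = Arrangement.offZeros g L := by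
    ext p
    simp only [mem_compl_iff, mem_iUnion, not_exists, Arrangement.offZeros, mem_ofPred_eq]
    exact forall₂_congr fun ℓ hℓ => not_congr (Set.ext_iff.mp (hg ℓ hℓ) p).symm
  rw [hU, ← hcard]
  exact Arrangement.connectedComponents_offZeros_finite_and_card_le g L
    fun ℓ hℓ => ⟨φ ℓ, (hφ ℓ hℓ).trans (hg ℓ hℓ).symm⟩
end

section
/- For every natural number n, there exists a set L of n distinct lines in ℝ² such that the complement ℝ² \ ⋃_{ℓ∈L} ℓ has exactly n(n+1)/2 + 1 connected components (so the bound n(n+1)/2 + 1 on the number of pancake pieces obtainable with n straight cuts is attained). -/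
namespace Pancake

/-- the affine function whose graph is the k-th line (tangent to the parabola y = x²). -/
noncomputable def lf (k : ℕ) (x : ℝ) : ℝ := 2 * k * x - (k : ℝ) ^ 2

/-- The k-th line. -/
def pline (k : ℕ) : Set (ℝ × ℝ) := {p | p.2 = lf k p.1}

/-- Region indexed by the interval `(a, b]` of lines below which the points lie;
points are above all other lines among `1..n`. -/
def region (n a b : ℕ) : Set (ℝ × ℝ) :=
  {p | (∀ i : ℕ, a < i → i ≤ b → p.2 < lf i p.1) ∧
       (∀ j : ℕ, 1 ≤ j → j ≤ n → (j ≤ a ∨ b < j) → lf j p.1 < p.2)}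

lemma between {x y m i M : ℝ} (h1 : m ≤ i) (h2 : i ≤ M)
    (hm : y < 2 * m * x - m ^ 2) (hM : y < 2 * M * x - M ^ 2) :
    y < 2 * i * x - i ^ 2 := by
  rcases le_total (2 * x) (m + i) with h | h
  · nlinarith [mul_nonneg (sub_nonneg.2 h2) (sub_nonneg.2 (by linarith : 2 * x ≤ i + M))]
  · nlinarith [mul_nonneg (sub_nonneg.2 h1) (sub_nonneg.2 h)]

lemma region_nonempty_top (n : ℕ) : ((0 : ℝ), (1 : ℝ)) ∈ region n 0 0 := by
  refine ⟨fun i h1 h2 => absurd h1 (by omega), fun j h1 _ _ => ?_⟩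
  have hj : (1 : ℝ) ≤ (j : ℝ) := by exact_mod_cast h1
  simp only [lf]
  nlinarith

lemma region_nonempty {n a b : ℕ} (hab : a < b) (hbn : b ≤ n) :
    ((((a : ℝ) + 1 + b) / 2),
      ((((a : ℝ) + 1 + b) / 2) ^ 2 - (((b : ℝ) - a - 1) / 2) ^ 2 - 1 / 2)) ∈ region n a b := by
  have hab' : (a : ℝ) + 1 ≤ (b : ℝ) := by exact_mod_cast hab
  constructor
  · intro i hi1 hi2
    have h1 : (a : ℝ) + 1 ≤ (i : ℝ) := by exact_mod_cast hi1
    have h2 : (i : ℝ) ≤ (b : ℝ) := by exact_mod_cast hi2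
    simp only [lf]
    nlinarith [mul_nonneg (sub_nonneg.2 h1) (sub_nonneg.2 h2)]
  · intro j _ _ hj
    simp only [lf]
    rcases hj with hj | hj
    · have h1 : (j : ℝ) ≤ (a : ℝ) := by exact_mod_cast hj
      nlinarith
    · have h1 : (b : ℝ) + 1 ≤ (j : ℝ) := by exact_mod_cast hj
      nlinarith

lemma region_subset {n a b : ℕ} {p : ℝ × ℝ} (hb : b ≤ n) (hp : p ∈ region n a b) :
    ∀ k, 1 ≤ k → k ≤ n → p.2 ≠ lf k p.1 := by
  intro k h1 h2
  by_cases hk : a < k ∧ k ≤ b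
  · exact ne_of_lt (hp.1 k hk.1 hk.2)
  · exact (ne_of_lt (hp.2 k h1 h2 (by omega))).symm

lemma region_cover {n : ℕ} {p : ℝ × ℝ} (hp : ∀ k, 1 ≤ k → k ≤ n → p.2 ≠ lf k p.1) :
    p ∈ region n 0 0 ∨ ∃ a b, a < b ∧ b ≤ n ∧ p ∈ region n a b := by
  classical
  set I := (Finset.Icc 1 n).filter (fun i => p.2 < lf i p.1) with hI
  have hnotmem : ∀ j, 1 ≤ j → j ≤ n → j ∉ I → lf j p.1 < p.2 := by
    intro j h1 h2 hj
    have : ¬ (p.2 < lf j p.1) := by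
      intro h; exact hj (Finset.mem_filter.2 ⟨Finset.mem_Icc.2 ⟨h1, h2⟩, h⟩)
    exact lt_of_le_of_ne (not_lt.1 this) (hp j h1 h2).symm
  by_cases hIe : I = ∅
  · left
    exact ⟨fun i h1 h2 => absurd h1 (by omega),
      fun j h1 h2 _ => hnotmem j h1 h2 (by simp [hIe])⟩
  · right
    have hne : I.Nonempty := Finset.nonempty_iff_ne_empty.2 hIe
    set m := I.min' hne with hm
    set M := I.max' hne with hM
    have hmI : m ∈ I := I.min'_mem hne
    have hMI : M ∈ I := I.max'_mem hne
    have hm1 : 1 ≤ m := (Finset.mem_Icc.1 (Finset.mem_filter.1 hmI).1).1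
    have hmn : m ≤ n := (Finset.mem_Icc.1 (Finset.mem_filter.1 hmI).1).2
    have hM1 : 1 ≤ M := (Finset.mem_Icc.1 (Finset.mem_filter.1 hMI).1).1
    have hMn : M ≤ n := (Finset.mem_Icc.1 (Finset.mem_filter.1 hMI).1).2
    have hmM : m ≤ M := I.min'_le M hMI
    have hpm : p.2 < lf m p.1 := (Finset.mem_filter.1 hmI).2
    have hpM : p.2 < lf M p.1 := (Finset.mem_filter.1 hMI).2
    refine ⟨m - 1, M, by omega, hMn, ?_, ?_⟩
    · intro i hi1 hi2
      have him : m ≤ i := by omega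
      have c1 : (m : ℝ) ≤ (i : ℝ) := by exact_mod_cast him
      have c2 : (i : ℝ) ≤ (M : ℝ) := by exact_mod_cast hi2
      simp only [lf] at hpm hpM ⊢
      exact between c1 c2 hpm hpM
    · intro j h1 h2 hj
      apply hnotmem j h1 h2
      intro hjI
      rcases hj with hj | hj
      · have := I.min'_le j hjI; omega
      · have := I.le_max' j hjI; omega

lemma region_iff {n a b a' b' : ℕ} {p : ℝ × ℝ}
    (hb : b ≤ n) (hb' : b' ≤ n)
    (h : p ∈ region n a b) (h' : p ∈ region n a' b') :
    ∀ k, (a < k ∧ k ≤ b) ↔ (a' < k ∧ k ≤ b') := by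
  intro k
  constructor
  · rintro ⟨h1, h2⟩
    by_contra hcon
    have hlt := h.1 k h1 h2
    have hgt := h'.2 k (by omega) (by omega) (by omega)
    exact absurd hlt (not_lt.2 hgt.le)
  · rintro ⟨h1, h2⟩
    by_contra hcon
    have hlt := h'.1 k h1 h2
    have hgt := h.2 k (by omega) (by omega) (by omega)
    exact absurd hlt (not_lt.2 hgt.le)

/-- continuity helper -/
lemma lf_continuous (k : ℕ) : Continuous (fun p : ℝ × ℝ => lf k p.1) := by
  unfold lf; fun_prop

lemma region_eq (n a b : ℕ) (hb : b ≤ n) :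
    region n a b = ⋂ k ∈ Finset.Icc 1 n,
      (if a < k ∧ k ≤ b then {p : ℝ × ℝ | p.2 < lf k p.1} else {p : ℝ × ℝ | lf k p.1 < p.2}) := by
  ext p
  simp only [Set.mem_iInter, region, Set.mem_setOf_eq, Finset.mem_Icc]
  constructor
  · rintro ⟨h1, h2⟩ k hk
    split_ifs with h
    · exact h1 k h.1 h.2
    · exact h2 k hk.1 hk.2 (by omega)
  · intro h
    constructor
    · intro i hi1 hi2
      have := h i ⟨by omega, by omega⟩
      rwa [if_pos ⟨hi1, hi2⟩] at this
    · intro j hj1 hj2 hj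
      have := h j ⟨hj1, hj2⟩
      rwa [if_neg (by omega)] at this

lemma region_isOpen (n a b : ℕ) (hb : b ≤ n) : IsOpen (region n a b) := by
  rw [region_eq n a b hb]
  refine isOpen_biInter_finset fun k _ => ?_
  split_ifs
  · exact isOpen_lt continuous_snd (lf_continuous k)
  · exact isOpen_lt (lf_continuous k) continuous_snd

lemma convex_below (k : ℕ) : Convex ℝ {p : ℝ × ℝ | p.2 < lf k p.1} := by
  have hlin : IsLinearMap ℝ (fun p : ℝ × ℝ => p.2 - 2 * (k : ℝ) * p.1) :=
    ⟨fun p q => by simp [Prod.fst_add, Prod.snd_add]; ring,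
     fun c p => by simp [Prod.smul_fst, Prod.smul_snd, smul_eq_mul]; ring⟩
  have h := convex_halfSpace_lt hlin (-(k : ℝ) ^ 2)
  have : {p : ℝ × ℝ | p.2 < lf k p.1} = {w : ℝ × ℝ | w.2 - 2 * (k : ℝ) * w.1 < -(k : ℝ) ^ 2} := by
    ext w; simp only [Set.mem_setOf_eq, lf]; constructor <;> intro <;> linarith
  rw [this]; exact h

lemma convex_above (k : ℕ) : Convex ℝ {p : ℝ × ℝ | lf k p.1 < p.2} := by
  have hlin : IsLinearMap ℝ (fun p : ℝ × ℝ => p.2 - 2 * (k : ℝ) * p.1) :=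
    ⟨fun p q => by simp [Prod.fst_add, Prod.snd_add]; ring,
     fun c p => by simp [Prod.smul_fst, Prod.smul_snd, smul_eq_mul]; ring⟩
  have h := convex_halfSpace_gt hlin (-(k : ℝ) ^ 2)
  have : {p : ℝ × ℝ | lf k p.1 < p.2} = {w : ℝ × ℝ | -(k : ℝ) ^ 2 < w.2 - 2 * (k : ℝ) * w.1} := by
    ext w; simp only [Set.mem_setOf_eq, lf]; constructor <;> intro <;> linarith
  rw [this]; exact h

lemma region_convex (n a b : ℕ) (hb : b ≤ n) : Convex ℝ (region n a b) := by
  rw [region_eq n a b hb]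
  refine convex_iInter fun k => convex_iInter fun _ => ?_
  split_ifs
  · exact convex_below k
  · exact convex_above k

/-- generic counting of connected components from an open preconnected partition -/
lemma card_components_of_partition {X : Type*} [TopologicalSpace X] {ι : Type*} (U : ι → Set X)
    (ho : ∀ i, IsOpen (U i)) (hc : ∀ i, IsPreconnected (U i))
    (hne : ∀ i, (U i).Nonempty) (hdis : ∀ i j, i ≠ j → Disjoint (U i) (U j))
    (hcov : ∀ x : X, ∃ i, x ∈ U i) :
    Nonempty (ι ≃ ConnectedComponents X) := by
  classical
  choose pt hpt using hne
  have hclosed : ∀ i, IsClosed (U i) := by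
    intro i
    rw [← isOpen_compl_iff]
    have : (U i)ᶜ = ⋃ j ∈ {j | j ≠ i}, U j := by
      ext x
      simp only [Set.mem_compl_iff, Set.mem_iUnion, Set.mem_setOf_eq]
      constructor
      · intro hx
        obtain ⟨j, hj⟩ := hcov x
        exact ⟨j, fun hji => hx (hji ▸ hj), hj⟩
      · rintro ⟨j, hji, hj⟩ hx
        exact (hdis j i hji).le_bot ⟨hj, hx⟩
    rw [this]
    exact isOpen_biUnion fun j _ => ho j
  have hcomp : ∀ i (x : X), x ∈ U i → connectedComponent x = U i := by
    intro i x hx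
    have hcl : IsClopen (U i) := ⟨hclosed i, ho i⟩
    exact subset_antisymm (hcl.connectedComponent_subset hx)
      ((hc i).subset_connectedComponent hx)
  refine ⟨Equiv.ofBijective (fun i => ConnectedComponents.mk (pt i)) ⟨?_, ?_⟩⟩
  · intro i j hij
    by_contra hne'
    rw [ConnectedComponents.coe_eq_coe] at hij
    rw [hcomp i (pt i) (hpt i), hcomp j (pt j) (hpt j)] at hij
    exact (hdis i j hne').le_bot ⟨hij ▸ hpt j, hpt j⟩
  · intro c
    obtain ⟨x, rfl⟩ := ConnectedComponents.surjective_coe c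
    obtain ⟨i, hi⟩ := hcov x
    exact ⟨i, by rw [ConnectedComponents.coe_eq_coe, hcomp i x hi, hcomp i (pt i) (hpt i)]⟩

/-- index type for the regions -/
abbrev Idx (n : ℕ) := Option {q : Fin (n + 1) × Fin (n + 1) // q.1 < q.2}

def idxEquiv (m : ℕ) : {q : Fin m × Fin m // q.1 < q.2} ≃ Σ j : Fin m, Fin j.val where
  toFun q := ⟨q.1.2, ⟨q.1.1.val, q.2⟩⟩
  invFun s := ⟨(⟨s.2.val, s.2.isLt.trans s.1.isLt⟩, s.1), s.2.isLt⟩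
  left_inv q := rfl
  right_inv s := rfl

lemma card_idx (n : ℕ) : Nat.card (Idx n) = n * (n + 1) / 2 + 1 := by
  rw [Nat.card_eq_fintype_card, Fintype.card_option, Fintype.card_congr (idxEquiv (n + 1))]
  rw [Fintype.card_sigma]
  simp only [Fintype.card_fin]
  have h : (∑ i ∈ Finset.range (n + 1), i) * 2 = n * (n + 1) := by
    rw [Finset.sum_range_id_mul_two]
    simp [Nat.mul_comm]
  have h2 : ∑ i : Fin (n + 1), (i : ℕ) = ∑ i ∈ Finset.range (n + 1), i :=
    Fin.sum_univ_eq_sum_range (fun i => i) (n + 1)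
  omega

def Rg (n : ℕ) : Idx n → Set (ℝ × ℝ)
  | none => region n 0 0
  | some q => region n q.1.1.val q.1.2.val

lemma Rg_b_le (n : ℕ) : ∀ idx : Idx n, ∃ a b : ℕ, a ≤ b ∧ b ≤ n ∧ Rg n idx = region n a b := by
  rintro (_ | ⟨⟨a, b⟩, hq⟩)
  · exact ⟨0, 0, le_refl 0, Nat.zero_le n, rfl⟩
  · exact ⟨a.val, b.val, le_of_lt hq, by omega, rfl⟩

lemma Rg_disjoint (n : ℕ) : ∀ i j : Idx n, i ≠ j → Disjoint (Rg n i) (Rg n j) := by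
  have key : ∀ (a b a' b' : ℕ), b ≤ n → b' ≤ n →
      (∀ p : ℝ × ℝ, p ∈ region n a b → p ∈ region n a' b' →
        ∀ k, (a < k ∧ k ≤ b) ↔ (a' < k ∧ k ≤ b')) :=
    fun a b a' b' hb hb' p h h' => region_iff hb hb' h h'
  rintro (_ | ⟨⟨a, b⟩, hq⟩) (_ | ⟨⟨a', b'⟩, hq'⟩) hij <;>
    rw [Set.disjoint_left] <;> intro p hp hp'
  · exact hij rfl
  · have := key 0 0 a'.val b'.val (Nat.zero_le n) (by omega) p hp hp' b'.val
    have hq'' : a'.val < b'.val := hq'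
    omega
  · have := key a.val b.val 0 0 (by omega) (Nat.zero_le n) p hp hp' b.val
    have hq'' : a.val < b.val := hq
    omega
  · have h := key a.val b.val a'.val b'.val (by omega) (by omega) p hp hp'
    have hq1 : a.val < b.val := hq
    have hq2 : a'.val < b'.val := hq'
    have e1 := h b.val
    have e2 := h b'.val
    have e3 := h (a.val + 1)
    have e4 := h (a'.val + 1)
    have hab : a.val = a'.val ∧ b.val = b'.val := by omega
    apply hij
    congr 1
    ext : 1
    · exact Prod.ext (Fin.ext hab.1) (Fin.ext hab.2)

lemma Rg_nonempty (n : ℕ) : ∀ idx : Idx n, (Rg n idx).Nonempty := by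
  rintro (_ | ⟨⟨a, b⟩, hq⟩)
  · exact ⟨_, region_nonempty_top n⟩
  · exact ⟨_, region_nonempty (show a.val < b.val from hq) (by omega)⟩

/-- the complement set -/
def Cset (n : ℕ) : Set (ℝ × ℝ) := {p | ∀ k, 1 ≤ k → k ≤ n → p.2 ≠ lf k p.1}

lemma card_components (n : ℕ) :
    Nat.card (ConnectedComponents ↥(Cset n)) = n * (n + 1) / 2 + 1 := by
  classical
  set U : Idx n → Set ↥(Cset n) := fun idx => Subtype.val ⁻¹' Rg n idx with hU
  have hsub : ∀ idx, Rg n idx ⊆ Cset n := by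
    intro idx
    obtain ⟨a, b, hab, hb, heq⟩ := Rg_b_le n idx
    rw [heq]
    intro p hp
    exact region_subset hb hp
  have himg : ∀ idx, Subtype.val '' (U idx) = Rg n idx := by
    intro idx
    rw [hU]
    rw [Subtype.image_preimage_coe]
    exact Set.inter_eq_right.2 (hsub idx)
  have ho : ∀ idx, IsOpen (U idx) := by
    intro idx
    obtain ⟨a, b, hab, hb, heq⟩ := Rg_b_le n idx
    exact (heq ▸ region_isOpen n a b hb).preimage continuous_subtype_val
  have hc : ∀ idx, IsPreconnected (U idx) := by
    intro idx
    rw [← Topology.IsInducing.isPreconnected_image Topology.IsInducing.subtypeVal, himg idx]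
    obtain ⟨a, b, hab, hb, heq⟩ := Rg_b_le n idx
    rw [heq]
    exact (region_convex n a b hb).isPreconnected
  have hne : ∀ idx, (U idx).Nonempty := by
    intro idx
    obtain ⟨p, hp⟩ := Rg_nonempty n idx
    exact ⟨⟨p, hsub idx hp⟩, hp⟩
  have hdis : ∀ i j, i ≠ j → Disjoint (U i) (U j) := by
    intro i j hij
    exact Disjoint.preimage _ (Rg_disjoint n i j hij)
  have hcov : ∀ x : ↥(Cset n), ∃ idx, x ∈ U idx := by
    rintro ⟨p, hp⟩
    rcases region_cover hp with h | ⟨a, b, hab, hb, h⟩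
    · exact ⟨none, h⟩
    · exact ⟨some ⟨(⟨a, by omega⟩, ⟨b, by omega⟩), hab⟩, h⟩
  obtain ⟨e⟩ := card_components_of_partition U ho hc hne hdis hcov
  rw [← Nat.card_congr e, card_idx]

lemma pline_isLine (k : ℕ) : IsLine (pline k) := by
  refine ⟨(0, -(k : ℝ) ^ 2), (1, 2 * (k : ℝ)), ?_, ?_⟩
  · intro h
    have := congrArg Prod.fst h
    simp at this
  · ext p
    constructor
    · intro h
      have h' : p.2 = 2 * k * p.1 - (k : ℝ) ^ 2 := h
      refine ⟨p.1, ?_⟩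
      have hrw : ((0 : ℝ), -(k : ℝ) ^ 2) + p.1 • ((1 : ℝ), 2 * (k : ℝ))
          = (p.1, 2 * k * p.1 - (k : ℝ) ^ 2) := by
        simp only [Prod.smul_mk, smul_eq_mul, Prod.mk_add_mk]
        rw [Prod.mk.injEq]
        constructor <;> ring
      rw [hrw, ← h']
    · rintro ⟨t, h⟩
      show p.2 = lf k p.1
      have h1 : p.1 = t := by rw [h]; simp [Prod.smul_mk]
      have h2 : p.2 = -(k : ℝ) ^ 2 + t * (2 * k) := by rw [h]; simp [Prod.smul_mk]
      simp only [lf]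
      rw [h1, h2]
      ring

end Pancake

/-- For every `n` there is a set of `n` distinct lines in the plane whose complement has
exactly `n(n+1)/2 + 1` connected components: the bound on the number of pancake pieces
obtainable with `n` straight cuts is attained. -/
theorem lines_divide_plane_attained (n : ℕ) :
    ∃ L : Finset (Set (ℝ × ℝ)), L.card = n ∧ (∀ ℓ ∈ L, IsLine ℓ) ∧
      Nat.card (ConnectedComponents ↥((⋃ ℓ ∈ L, ℓ)ᶜ)) = n * (n + 1) / 2 + 1 := by
  classical
  refine ⟨(Finset.Icc 1 n).image Pancake.pline, ?_, ?_, ?_⟩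
  · rw [Finset.card_image_of_injOn, Nat.card_Icc]
    · omega
    · intro j hj k hk hjk
      have h0 : ((0 : ℝ), Pancake.lf j 0) ∈ Pancake.pline j := rfl
      have h1 : ((1 : ℝ), Pancake.lf j 1) ∈ Pancake.pline j := rfl
      rw [hjk] at h0 h1
      have e0 : Pancake.lf j 0 = Pancake.lf k 0 := h0
      have e1 : Pancake.lf j 1 = Pancake.lf k 1 := h1
      simp only [Pancake.lf] at e0 e1
      have : (j : ℝ) = (k : ℝ) := by linarith
      exact_mod_cast this
  · intro ℓ hℓ
    obtain ⟨k, _, rfl⟩ := Finset.mem_image.1 hℓ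
    exact Pancake.pline_isLine k
  · have hset : (⋃ ℓ ∈ (Finset.Icc 1 n).image Pancake.pline, ℓ)ᶜ = Pancake.Cset n := by
      ext p
      constructor
      · intro h
        intro k h1 h2 heq
        exact h (Set.mem_iUnion₂.2 ⟨Pancake.pline k,
          Finset.mem_image.2 ⟨k, Finset.mem_Icc.2 ⟨h1, h2⟩, rfl⟩, heq⟩)
      · intro h hmem
        obtain ⟨ℓ, hℓ, hpℓ⟩ := Set.mem_iUnion₂.1 hmem
        obtain ⟨k, hk, rfl⟩ := Finset.mem_image.1 hℓ
        exact h k (Finset.mem_Icc.1 hk).1 (Finset.mem_Icc.1 hk).2 hpℓ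
    rw [hset]
    exact Pancake.card_components n
end

section
/- For every natural number n, 2·∑_{k=0}^{n} C(2n,k)² = C(4n,2n) + C(2n,n)², where C(m,k) denotes the binomial coefficient; equivalently, 2·∑_{k=0}^{n-1} C(2n,k)² = C(4n,2n) − C(2n,n)² for n ≥ 1. -/
/-! Row `2n` of Pascal's triangle is symmetric about its middle entry, so twice the sum of
squares over its first half is the sum of all its squares plus the middle square `C(2n,n)²`;
by Vandermonde's identity the full sum of squares is `C(4n,2n)`. -/

open Finset

theorem Finset.sum_range_two_mul_add_one_add_middle {M : Type*} [AddCommMonoid M] (f : ℕ → M)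
    (n : ℕ) (hf : ∀ i < n, f (2 * n - i) = f i) :
    ∑ i ∈ range (2 * n + 1), f i + f n = 2 • ∑ i ∈ range (n + 1), f i := by
  have upper_half : ∑ i ∈ range n, f (n + 1 + i) = ∑ i ∈ range n, f i := by
    rw [← sum_range_reflect f n]
    refine sum_congr rfl fun i hi => ?_
    have hi := mem_range.mp hi
    rw [← hf (n - 1 - i) (by omega)]
    congr 1
    omega
  rw [show 2 * n + 1 = n + 1 + n by ring, sum_range_add, upper_half, sum_range_succ, two_nsmul]
  abel

/-- The binomial coefficient identity (Gould (3.68), OEIS A036910):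
`2·∑_{k=0}^{n} C(2n,k)² = C(4n,2n) + C(2n,n)²`. -/
theorem sum_sq_binomial_identity (n : ℕ) :
    2 * ∑ k ∈ Finset.range (n + 1), (Nat.choose (2 * n) k) ^ 2 =
      Nat.choose (4 * n) (2 * n) + (Nat.choose (2 * n) n) ^ 2 := by
  have choose_symm_upper : ∀ i < n, (2 * n).choose (2 * n - i) ^ 2 = (2 * n).choose i ^ 2 :=
    fun i hi => by rw [Nat.choose_symm (by omega)]
  rw [← smul_eq_mul, ← sum_range_two_mul_add_one_add_middle _ n choose_symm_upper,
    Nat.sum_range_choose_sq, show 2 * (2 * n) = 4 * n by ring]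
end

section
/- In Gijswijt's sequence, the value 4 first appears at the 220th term: a(220) = 4 and a(n) < 4 for all 1 ≤ n < 220. -/
/-- The curling number of a finite sequence `s` of positive integers: the largest `k ≥ 1`
such that `s = X ++ Y ++ ⋯ ++ Y` with `k` copies of a nonempty block `Y`
(and `X` possibly empty); it is `0` if `s` is empty. -/
noncomputable def curling (s : List ℕ) : ℕ :=
  sSup {k | 1 ≤ k ∧ ∃ X Y : List ℕ, Y ≠ [] ∧ s = X ++ (List.replicate k Y).flatten}

/-- `gijswijtList n = [a(1), a(2), …, a(n)]`, the first `n` terms of Gijswijt's sequence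
(OEIS A090822): `a(1) = 1` and, for `n ≥ 1`, `a(n+1)` is the curling number of
`(a(1), …, a(n))`. -/
noncomputable def gijswijtList : ℕ → List ℕ
  | 0 => []
  | n + 1 =>
    let l := gijswijtList n
    l ++ [if l = [] then 1 else curling l]

/-- `gijswijt n` is the `n`-th term (`n ≥ 1`) of Gijswijt's sequence (OEIS A090822). -/
noncomputable def gijswijt (n : ℕ) : ℕ := (gijswijtList n).getLastD 0

/- ----------------- auxiliary computable development ----------------- -/

/-- Check whether the *reversed* sequence `r` starts with `k` copies of some
nonempty block, via a periodicity test. -/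
def hasCurlR (r : List ℕ) (k : ℕ) : Bool :=
  (List.range' 1 (r.length / k)).any fun m =>
    r.take ((k - 1) * m) == (r.drop m).take ((k - 1) * m)

lemma flatten_replicate_length (k : ℕ) (Y : List ℕ) :
    ((List.replicate k Y).flatten).length = k * Y.length := by
  induction k with
  | zero => simp
  | succ n ih => simp [List.replicate_succ, ih, Nat.succ_mul, Nat.add_comm]

lemma flatten_replicate_succ' (k : ℕ) (Y : List ℕ) :
    (List.replicate (k + 1) Y).flatten = (List.replicate k Y).flatten ++ Y := by
  rw [List.replicate_succ', List.flatten_append]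
  simp

lemma reverse_flatten_replicate (k : ℕ) (Y : List ℕ) :
    ((List.replicate k Y).flatten).reverse = (List.replicate k Y.reverse).flatten := by
  induction k with
  | zero => simp
  | succ n ih =>
    rw [List.replicate_succ, List.flatten_cons, List.reverse_append, ih,
      flatten_replicate_succ']

lemma period_to_flatten (u : List ℕ) (k m : ℕ)
    (h : u.take (k * m) = (u.drop m).take (k * m)) :
    u.take ((k + 1) * m) = (List.replicate (k + 1) (u.take m)).flatten := by
  induction k with
  | zero => simp
  | succ n ih =>
    have hmono : n * m ≤ (n + 1) * m := by nlinarith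
    have h' : u.take (n * m) = (u.drop m).take (n * m) := by
      have h2 := congrArg (List.take (n * m)) h
      rwa [List.take_take, List.take_take, Nat.min_eq_left hmono] at h2
    have hsucc : u.take ((n + 1 + 1) * m) = u.take m ++ (u.drop m).take ((n + 1) * m) := by
      rw [show (n + 1 + 1) * m = m + (n + 1) * m by ring, List.take_add]
    rw [hsucc, ← h, ih h']
    simp [List.replicate_succ]

lemma flatten_to_period (u : List ℕ) (k m : ℕ) (hm : 1 ≤ m)
    (hlen : (k + 1) * m ≤ u.length)
    (h : u.take ((k + 1) * m) = (List.replicate (k + 1) (u.take m)).flatten) :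
    u.take (k * m) = (u.drop m).take (k * m) := by
  have hmum : m ≤ u.length := by nlinarith
  have hY : (u.take m).length = m := by
    rw [List.length_take]; omega
  have hflen : ((List.replicate k (u.take m)).flatten).length = k * m := by
    rw [flatten_replicate_length, hY]
  have hmono : k * m ≤ (k + 1) * m := by nlinarith
  have h1 : u.take (k * m) = (List.replicate k (u.take m)).flatten := by
    have h2 := congrArg (List.take (k * m)) h
    rw [List.take_take, Nat.min_eq_left hmono, flatten_replicate_succ',
      List.take_left' hflen] at h2
    exact h2
  have hdropu : u.drop m = (List.replicate k (u.take m)).flatten ++ u.drop ((k + 1) * m) := by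
    have hsplit : u.drop m = (u.take ((k + 1) * m)).drop m ++ u.drop ((k + 1) * m) := by
      conv_lhs => rw [← List.take_append_drop ((k + 1) * m) u]
      rw [List.drop_append_of_le_length
        (by rw [List.length_take, Nat.min_eq_left hlen]; nlinarith)]
    rw [hsplit, h, List.replicate_succ, List.flatten_cons, List.drop_left' hY]
  have h2 : (u.drop m).take (k * m) = (List.replicate k (u.take m)).flatten := by
    rw [hdropu, List.take_left' hflen]
  rw [h1, h2]

lemma hasCurlR_iff (r : List ℕ) (k : ℕ) (hk : 1 ≤ k) :
    hasCurlR r k = true ↔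
      ∃ m, 1 ≤ m ∧ k * m ≤ r.length ∧
        r.take (k * m) = (List.replicate k (r.take m)).flatten := by
  obtain ⟨k', rfl⟩ : ∃ k', k = k' + 1 := ⟨k - 1, by omega⟩
  rw [hasCurlR, List.any_eq_true]
  constructor
  · rintro ⟨m, hmem, hbeq⟩
    rw [List.mem_range'_1] at hmem
    rw [beq_iff_eq] at hbeq
    have hm1 : 1 ≤ m := hmem.1
    have hdiv : m ≤ r.length / (k' + 1) := by omega
    have hkm : (k' + 1) * m ≤ r.length := by
      have h5 := (Nat.le_div_iff_mul_le (show 0 < k' + 1 by omega)).mp hdiv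
      have h6 : m * (k' + 1) = (k' + 1) * m := Nat.mul_comm _ _
      omega
    simp only [Nat.add_sub_cancel] at hbeq
    exact ⟨m, hm1, hkm, period_to_flatten r k' m hbeq⟩
  · rintro ⟨m, hm1, hkm, heq⟩
    refine ⟨m, ?_, ?_⟩
    · rw [List.mem_range'_1]
      refine ⟨hm1, ?_⟩
      have : m ≤ r.length / (k' + 1) :=
        (Nat.le_div_iff_mul_le (by omega)).mpr (by rw [Nat.mul_comm]; exact hkm)
      omega
    · rw [beq_iff_eq]
      simp only [Nat.add_sub_cancel]
      exact flatten_to_period r k' m hm1 hkm heq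

lemma mem_iffR (s : List ℕ) (hs : s ≠ []) (k : ℕ) (hk : 1 ≤ k) :
    (∃ X Y : List ℕ, Y ≠ [] ∧ s = X ++ (List.replicate k Y).flatten) ↔
      hasCurlR s.reverse k = true := by
  rw [hasCurlR_iff s.reverse k hk]
  constructor
  · rintro ⟨X, Y, hY, hXY⟩
    have hm1 : 1 ≤ Y.length := List.length_pos_iff.mpr hY
    have hrev : s.reverse = (List.replicate k Y.reverse).flatten ++ X.reverse := by
      rw [hXY, List.reverse_append, reverse_flatten_replicate]
    have hflen : ((List.replicate k Y.reverse).flatten).length = k * Y.length := by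
      rw [flatten_replicate_length, List.length_reverse]
    have hlen : k * Y.length ≤ s.reverse.length := by
      rw [hrev]; simp only [List.length_append]; omega
    have h2 : s.reverse.take Y.length = Y.reverse := by
      obtain ⟨k', rfl⟩ : ∃ k', k = k' + 1 := ⟨k - 1, by omega⟩
      have hsp : s.reverse = Y.reverse ++ ((List.replicate k' Y.reverse).flatten ++ X.reverse) := by
        rw [hrev, List.replicate_succ, List.flatten_cons, List.append_assoc]
      rw [hsp, List.take_left' (by rw [List.length_reverse])]
    have h1 : s.reverse.take (k * Y.length) = (List.replicate k Y.reverse).flatten := by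
      rw [hrev, List.take_left' hflen]
    exact ⟨Y.length, hm1, hlen, by rw [h1, h2]⟩
  · rintro ⟨m, hm1, hkm, heq⟩
    refine ⟨(s.reverse.drop (k * m)).reverse, (s.reverse.take m).reverse, ?_, ?_⟩
    · rw [Ne, List.reverse_eq_nil_iff, List.take_eq_nil_iff]
      push_neg
      exact ⟨by omega, by rwa [Ne, List.reverse_eq_nil_iff]⟩
    · conv_lhs => rw [← List.reverse_reverse s]
      conv_lhs => rw [← List.take_append_drop (k * m) s.reverse]
      rw [List.reverse_append, heq, reverse_flatten_replicate]

lemma mem_down {s : List ℕ} {k j : ℕ} (_hj : 1 ≤ j) (hjk : j ≤ k)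
    (h : ∃ X Y : List ℕ, Y ≠ [] ∧ s = X ++ (List.replicate k Y).flatten) :
    ∃ X Y : List ℕ, Y ≠ [] ∧ s = X ++ (List.replicate j Y).flatten := by
  obtain ⟨X, Y, hY, hXY⟩ := h
  refine ⟨X ++ (List.replicate (k - j) Y).flatten, Y, hY, ?_⟩
  rw [hXY, List.append_assoc, ← List.flatten_append, ← List.replicate_add]
  congr 3
  omega

lemma mem_le_length (s : List ℕ) (k : ℕ)
    (h : 1 ≤ k ∧ ∃ X Y : List ℕ, Y ≠ [] ∧ s = X ++ (List.replicate k Y).flatten) :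
    k ≤ s.length := by
  obtain ⟨hk, X, Y, hY, hXY⟩ := h
  have hm1 : 1 ≤ Y.length := List.length_pos_iff.mpr hY
  have : s.length = X.length + k * Y.length := by
    rw [hXY]; simp [flatten_replicate_length]
  nlinarith

lemma curling_eq_of (s : List ℕ) (hs : s ≠ []) (c : ℕ) (h1 : 1 ≤ c)
    (h2 : hasCurlR s.reverse c = true) (h3 : hasCurlR s.reverse (c + 1) = false) :
    curling s = c := by
  have hcS : c ∈ {k | 1 ≤ k ∧ ∃ X Y : List ℕ, Y ≠ [] ∧
      s = X ++ (List.replicate k Y).flatten} :=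
    ⟨h1, (mem_iffR s hs c h1).mpr h2⟩
  rw [curling]
  apply le_antisymm
  · apply csSup_le ⟨c, hcS⟩
    intro j hj
    by_contra hlt
    push_neg at hlt
    have : hasCurlR s.reverse (c + 1) = true :=
      (mem_iffR s hs (c + 1) (by omega)).mp (mem_down (by omega) (by omega) hj.2)
    rw [this] at h3
    exact absurd h3 (by simp)
  · exact le_csSup ⟨s.length, fun j hj => mem_le_length s j hj⟩ hcS

lemma gij_len : ∀ n, (gijswijtList n).length = n := by
  intro n
  induction n with
  | zero => rfl
  | succ n ih =>
    show (gijswijtList n ++ [if gijswijtList n = [] then 1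
        else curling (gijswijtList n)]).length = n + 1
    simp [ih]

/-- The first 220 terms of Gijswijt's sequence, in reverse order. -/
def R220 : List ℕ := [4, 3, 3, 3, 3, 2, 2, 2, 3, 2, 2, 2, 3, 2, 2, 2, 3, 3, 2, 2, 2, 3, 2, 2, 2, 3, 2, 2, 2, 3, 3, 2, 2, 2, 3, 2, 2, 2, 3, 2, 2, 2, 1, 1, 2, 1, 1, 3, 2, 2, 2, 1, 1, 2, 1, 1, 2, 3, 2, 2, 2, 1, 1, 2, 1, 1, 3, 2, 2, 2, 1, 1, 2, 1, 1, 2, 3, 3, 2, 2, 2, 3, 2, 2, 2, 3, 2, 2, 2, 1, 1, 2, 1, 1, 3, 2, 2, 2, 1, 1, 2, 1, 1, 2, 3, 2, 2, 2, 1, 1, 2, 1, 1, 3, 2, 2, 2, 1, 1, 2, 1, 1, 2, 3, 2, 2, 2, 3, 3, 2, 2, 2, 3, 2, 2, 2, 3, 2, 2, 2, 1, 1, 2, 1, 1, 3, 2, 2, 2, 1, 1, 2, 1, 1, 2, 3, 2, 2, 2, 1, 1, 2, 1, 1, 3, 2, 2, 2, 1, 1, 2, 1, 1, 2, 3, 3,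 2, 2, 2, 3, 2, 2, 2, 3, 2, 2, 2, 1, 1, 2, 1, 1, 3, 2, 2, 2, 1, 1, 2, 1, 1, 2, 3, 2, 2, 2, 1, 1, 2, 1, 1, 3, 2, 2, 2, 1, 1, 2, 1, 1]

set_option maxRecDepth 10000 in
lemma keylen : R220.length = 220 := by decide

set_option maxRecDepth 40000 in
set_option maxHeartbeats 4000000 in
lemma key1 : ∀ j < 219, 1 ≤ R220.getD j 0 ∧
    hasCurlR (R220.drop (j + 1)) (R220.getD j 0) = true ∧
    hasCurlR (R220.drop (j + 1)) (R220.getD j 0 + 1) = false := by decide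

set_option maxRecDepth 10000 in
lemma key3 : ∀ j < 220, 1 ≤ j → R220.getD j 0 < 4 := by decide

lemma drop_cons (l : List ℕ) (j : ℕ) (h : j < l.length) :
    l.drop j = l.getD j 0 :: l.drop (j + 1) := by
  rw [List.drop_eq_getElem_cons h]
  congr 1
  rw [List.getD_eq_getElem?_getD, List.getElem?_eq_getElem h]
  rfl

lemma main : ∀ n, n ≤ 220 → (gijswijtList n).reverse = R220.drop (220 - n) := by
  intro n
  induction n with
  | zero =>
    intro _
    show ([] : List ℕ).reverse = R220.drop 220
    have : R220.length ≤ 220 := by rw [keylen]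
    rw [List.drop_eq_nil_of_le this]
    rfl
  | succ n ih =>
    intro hn1
    have hrev := ih (by omega)
    have hstep : gijswijtList (n + 1) = gijswijtList n ++
        [if gijswijtList n = [] then 1 else curling (gijswijtList n)] := rfl
    by_cases h0 : n = 0
    · subst h0
      rw [hstep]
      show (([] : List ℕ) ++ [if ([] : List ℕ) = [] then 1
          else curling []]).reverse = R220.drop 219
      rw [if_pos rfl]
      rw [drop_cons R220 219 (by rw [keylen]; omega)]
      rw [List.drop_eq_nil_of_le (by rw [keylen])]
      rfl
    · have hne : gijswijtList n ≠ [] := by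
        intro h
        have hl := gij_len n
        rw [h] at hl
        simp at hl
        omega
      have hj1 : 220 - n = (220 - (n + 1)) + 1 := by omega
      rw [hj1] at hrev
      obtain ⟨hc1, hc2, hc3⟩ := key1 (220 - (n + 1)) (by omega)
      have hcurl : curling (gijswijtList n) = R220.getD (220 - (n + 1)) 0 := by
        apply curling_eq_of _ hne _ hc1
        · rw [hrev]; exact hc2
        · rw [hrev]; exact hc3
      rw [hstep, if_neg hne, List.reverse_append, hcurl, hrev,
        drop_cons R220 (220 - (n + 1)) (by rw [keylen]; omega)]
      rfl

/-- In Gijswijt's sequence, the value 4 first appears at the 220th term. -/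
theorem gijswijt_four_at_220 :
    gijswijt 220 = 4 ∧ ∀ n, 1 ≤ n → n < 220 → gijswijt n < 4 := by
  constructor
  · have h220 := main 220 le_rfl
    rw [gijswijt, List.getLastD_eq_getLast?, ← List.head?_reverse, h220]
    rfl
  · intro n h1 h2
    have hrev := main n (by omega)
    rw [gijswijt, List.getLastD_eq_getLast?, ← List.head?_reverse, hrev,
      drop_cons R220 (220 - n) (by rw [keylen]; omega)]
    show (R220.getD (220 - n) 0) < 4
    exact key3 (220 - n) (by omega) (by omega)
end

section
/- For every n ≥ 3, the Stepping Stones number satisfies a(n) ≥ 6(n−1); i.e., for each n ≥ 3 there exists an (n, 6(n−1))-placement. -/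
/-!
Sixteen stones `2, …, 17` fit around the three ones at `(-6, -5)`, `(-4, -3)` and `(0, 0)` (a
finite check), which already settles `n = 3`. From then on each stone `k` goes on a cell adjacent to
stone `k - 1`, to exactly one `1` and to nothing else, so its neighbours sum to `1 + (k - 1) = k`.
With ones at `(3j, 0)` for `j ≤ n - 4` such a path runs right along `y = 1`, turns around one more
`1` at `(3n - 10, -1)` and comes back along `y = -1`, which gives six stones for each further `1`.
-/

/-- Two cells of `ℤ²` are adjacent if they are distinct and differ by at most 1 in
each coordinate (the 8 surrounding cells). -/
def Adj (a b : ℤ × ℤ) : Prop :=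
  a ≠ b ∧ (a.1 - b.1).natAbs ≤ 1 ∧ (a.2 - b.2).natAbs ≤ 1

instance : DecidableRel Adj := fun a b => by
  unfold Adj; infer_instance

/-- An `(n,m)`-placement in the Stepping Stones problem (OEIS A337663): an `n`-element
set `S` of cells of `ℤ²`, each holding a stone of value 1, together with pairwise
distinct cells `p 2, p 3, …, p m`, all outside `S`, such that for each `2 ≤ k ≤ m`
the values of the already-placed stones on the 8 cells adjacent to `p k`
(value 1 for cells of `S`, value `j` for `p j` with `2 ≤ j < k`) sum to `k`.
For `m = 1` only the value-1 stones are placed and there is no condition. -/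
def IsPlacement (n m : ℕ) : Prop :=
  ∃ (S : Finset (ℤ × ℤ)) (p : ℕ → ℤ × ℤ),
    S.card = n ∧
    (∀ j k, 2 ≤ j → j < k → k ≤ m → p j ≠ p k) ∧
    (∀ k, 2 ≤ k → k ≤ m → p k ∉ S) ∧
    (∀ k, 2 ≤ k → k ≤ m →
      (S.filter (fun s => Adj s (p k))).card
        + ∑ j ∈ Finset.Ico 2 k, (if Adj (p j) (p k) then j else 0) = k)

theorem adj_mk_mk_iff {a b c d : ℤ} :
    Adj (a, b) (c, d) ↔ ¬(a = c ∧ b = d) ∧ (a - c).natAbs ≤ 1 ∧ (b - d).natAbs ≤ 1 := by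
  simp [Adj, Prod.ext_iff]

def neighbourSum (S : Finset (ℤ × ℤ)) (p : ℕ → ℤ × ℤ) (k : ℕ) : ℕ :=
  (S.filter (fun s => Adj s (p k))).card + ∑ j ∈ Finset.Ico 2 k, if Adj (p j) (p k) then j else 0

theorem IsPlacement.mono {n m m' : ℕ} (h : IsPlacement n m) (hm : m' ≤ m) : IsPlacement n m' := by
  obtain ⟨S, p, hcard, hne, hS, hsum⟩ := h
  exact ⟨S, p, hcard, fun j k hj hjk hk => hne j k hj hjk (hk.trans hm),
    fun k hk hkm => hS k hk (hkm.trans hm), fun k hk hkm => hsum k hk (hkm.trans hm)⟩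

theorem neighbourSum_eq_self {S : Finset (ℤ × ℤ)} {p : ℕ → ℤ × ℤ} {k : ℕ} (hk : 3 ≤ k)
    (hone : ∃! s, s ∈ S ∧ Adj s (p k))
    (hprev : ∀ j ∈ Finset.Ico 2 k, Adj (p j) (p k) ↔ j + 1 = k) :
    neighbourSum S p k = k := by
  have hS : (S.filter (fun s => Adj s (p k))).card = 1 := by
    simpa [Finset.card_eq_one_iff_existsUnique] using hone
  have hmem : k - 1 ∈ Finset.Ico 2 k := Finset.mem_Ico.2 ⟨by omega, by omega⟩
  have hsum : ∑ j ∈ Finset.Ico 2 k, (if Adj (p j) (p k) then j else 0) = k - 1 := by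
    rw [Finset.sum_eq_single_of_mem (k - 1) hmem, if_pos ((hprev _ hmem).2 (by omega))]
    intro j hj hne
    rw [if_neg (fun h => hne (by have := (hprev j hj).1 h; omega))]
  rw [neighbourSum, hS, hsum]
  omega

theorem isPlacement_card_of_chain {S : Finset (ℤ × ℤ)} {p : ℕ → ℤ × ℤ} {m₀ m : ℕ} (hm₀ : 2 ≤ m₀)
    (hne : ∀ j k, 2 ≤ j → j < k → k ≤ m → p j ≠ p k)
    (hS : ∀ k, 2 ≤ k → k ≤ m → p k ∉ S)
    (hinit : ∀ k, 2 ≤ k → k ≤ m₀ → neighbourSum S p k = k)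
    (hone : ∀ k, m₀ < k → k ≤ m → ∃! s, s ∈ S ∧ Adj s (p k))
    (hprev : ∀ j k, 2 ≤ j → j < k → m₀ < k → k ≤ m → (Adj (p j) (p k) ↔ j + 1 = k)) :
    IsPlacement S.card m := by
  refine ⟨S, p, rfl, hne, hS, fun k hk hkm => ?_⟩
  rcases le_or_gt k m₀ with hk₀ | hk₀
  · exact hinit k hk hk₀
  · exact neighbourSum_eq_self (by omega) (hone k hk₀ hkm)
      fun j hj => hprev j k (Finset.mem_Ico.1 hj).1 (Finset.mem_Ico.1 hj).2 hk₀ hkm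

namespace SteppingStones

def seed : ℕ → ℤ × ℤ
  | 2 => (-5, -4)
  | 3 => (-5, -3)
  | 4 => (-4, -2)
  | 5 => (-3, -3)
  | 6 => (-6, -4)
  | 7 => (-7, -4)
  | 8 => (-5, -2)
  | 9 => (-5, -5)
  | 10 => (-3, -2)
  | 11 => (-4, -5)
  | 12 => (-5, -1)
  | 13 => (-7, -3)
  | 14 => (-7, -5)
  | 15 => (-2, -2)
  | 16 => (-1, -1)
  | 17 => (-1, 0)
  | _ => (0, 0)

def seedOnes : Finset (ℤ × ℤ) := {(-6, -5), (-4, -3), (0, 0)}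

theorem neighbourSum_seed : ∀ k ≤ 17, 2 ≤ k → neighbourSum seedOnes seed k = k := by decide

theorem seed_ne : ∀ k ≤ 17, ∀ j < k, 2 ≤ j → seed j ≠ seed k := by decide

theorem seed_not_mem : ∀ k ≤ 17, 2 ≤ k → seed k ∉ seedOnes := by decide

theorem seed_fst_le : ∀ k ≤ 17, 2 ≤ k → (seed k).1 ≤ -1 := by decide

theorem adj_seed_zero_one_iff : ∀ j ≤ 17, 2 ≤ j → (Adj (seed j) (0, 1) ↔ j = 17) := by decide

theorem isPlacement_three_seventeen : IsPlacement 3 17 :=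
  ⟨seedOnes, seed, rfl, fun j k hj hjk hk => seed_ne k hk j hjk hj,
    fun k hk hkm => seed_not_mem k hkm hk, fun k hk hkm => neighbourSum_seed k hkm hk⟩

def ones (r : ℕ) : Finset (ℤ × ℤ) :=
  insert (-6, -5) <| insert (-4, -3) <| insert ((3 * r + 2 : ℤ), -1) <|
    (Finset.range (r + 1)).image fun j : ℕ => ((3 * j : ℤ), (0 : ℤ))

theorem mem_ones_iff {r : ℕ} {a b : ℤ} :
    (a, b) ∈ ones r ↔ (a = -6 ∧ b = -5) ∨ (a = -4 ∧ b = -3) ∨ (a = 3 * r + 2 ∧ b = -1) ∨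
      (b = 0 ∧ 0 ≤ a ∧ a ≤ 3 * r ∧ 3 ∣ a) := by
  simp only [ones, Finset.mem_insert, Finset.mem_image, Finset.mem_range, Prod.mk.injEq]
  refine or_congr_right <| or_congr_right <| or_congr_right ⟨?_, ?_⟩
  · rintro ⟨j, hj, rfl, rfl⟩
    omega
  · rintro ⟨rfl, ha, har, j, rfl⟩
    exact ⟨j.toNat, by omega, by omega, rfl⟩

theorem card_ones (r : ℕ) : (ones r).card = r + 4 := by
  have hrow : ((Finset.range (r + 1)).image fun j : ℕ => ((3 * j : ℤ), (0 : ℤ))).card = r + 1 := by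
    rw [Finset.card_image_of_injective _ fun i j h => by simp only [Prod.mk.injEq] at h; omega]
    simp
  rw [ones, Finset.card_insert_of_notMem, Finset.card_insert_of_notMem,
    Finset.card_insert_of_notMem, hrow]
  all_goals
    simp only [Finset.mem_insert, Finset.mem_image, Prod.mk.injEq]
    omega

def snake (r t : ℕ) : ℤ × ℤ :=
  if t ≤ 3 * r + 1 then (t, 1)
  else if t = 3 * r + 2 then (3 * r + 2, 0)
  else if t = 3 * r + 3 then (3 * r + 3, -1)
  else if t = 3 * r + 4 then (3 * r + 2, -2)
  else if t = 3 * r + 5 then (3 * r + 1, -2)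
  else (6 * r + 6 - t, -1)

variable {r s t : ℕ}

theorem snake_zero : snake r 0 = (0, 1) := by
  simp [snake]

theorem one_le_snake_fst (ht₀ : 1 ≤ t) (ht : t ≤ 6 * r) : 1 ≤ (snake r t).1 := by
  unfold snake
  split_ifs <;> simp only <;> omega

theorem adj_snake_iff (hst : s < t) :
    Adj (snake r s) (snake r t) ↔ s + 1 = t := by
  unfold snake
  split_ifs <;> rw [adj_mk_mk_iff] <;> omega

theorem snake_ne (hst : s < t) : snake r s ≠ snake r t := by
  unfold snake
  split_ifs <;> simp only [ne_eq, Prod.mk.injEq] <;> omega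

theorem snake_not_mem_ones (ht : t ≤ 6 * r) : snake r t ∉ ones r := by
  unfold snake
  split_ifs <;> rw [mem_ones_iff] <;> omega

theorem existsUnique_adj_snake (ht : t ≤ 6 * r) : ∃! c, c ∈ ones r ∧ Adj c (snake r t) := by
  -- the `1` of the row `y = 0` nearest to the cell, except around the turn
  refine ⟨if t ≤ 3 * r + 1 then (3 * ((t + 1 : ℤ) / 3), 0)
    else if t ≤ 3 * r + 5 then (3 * r + 2, -1) else (3 * ((6 * r + 7 - t : ℤ) / 3), 0), ?_, ?_⟩
  · unfold snake
    split_ifs <;> beta_reduce <;> rw [mem_ones_iff, adj_mk_mk_iff] <;> omega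
  · rintro ⟨a, b⟩ ⟨hmem, hadj⟩
    rw [mem_ones_iff] at hmem
    unfold snake at hadj
    split_ifs at hadj ⊢ <;> rw [adj_mk_mk_iff] at hadj <;> rw [Prod.mk.injEq] <;> omega

theorem mem_seedOnes_of_mem_ones {c : ℤ × ℤ} (hc : c ∈ ones r) (hc₁ : c.1 ≤ 0) :
    c ∈ seedOnes := by
  obtain ⟨a, b⟩ := c
  rw [mem_ones_iff] at hc
  simp only [seedOnes, Finset.mem_insert, Finset.mem_singleton, Prod.mk.injEq]
  omega

theorem seedOnes_subset_ones : seedOnes ⊆ ones r := by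
  rintro ⟨a, b⟩ h
  simp only [seedOnes, Finset.mem_insert, Finset.mem_singleton, Prod.mk.injEq] at h
  rw [mem_ones_iff]
  omega

theorem filter_adj_ones {c : ℤ × ℤ} (hc : c.1 ≤ -1) :
    (ones r).filter (fun s => Adj s c) = seedOnes.filter (fun s => Adj s c) := by
  ext s
  simp only [Finset.mem_filter]
  refine ⟨fun ⟨hs, hadj⟩ => ⟨mem_seedOnes_of_mem_ones hs ?_, hadj⟩,
    fun ⟨hs, hadj⟩ => ⟨seedOnes_subset_ones hs, hadj⟩⟩
  have := hadj.2.1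
  omega

theorem adj_seed_snake_iff {j : ℕ} (hj : 2 ≤ j) (hj' : j ≤ 17) (ht : t ≤ 6 * r) :
    Adj (seed j) (snake r t) ↔ j = 17 ∧ t = 0 := by
  obtain rfl | ht₀ := t.eq_zero_or_pos
  · simp [snake_zero, adj_seed_zero_one_iff j hj' hj]
  · have := seed_fst_le j hj' hj
    have := one_le_snake_fst ht₀ ht
    refine ⟨fun h => ?_, fun h => by omega⟩
    have := h.2.1
    omega

theorem seed_ne_snake {j : ℕ} (hj : 2 ≤ j) (hj' : j ≤ 17) (ht : t ≤ 6 * r) :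
    seed j ≠ snake r t := by
  intro h
  have hx := seed_fst_le j hj' hj
  rw [h] at hx
  obtain rfl | ht₀ := t.eq_zero_or_pos
  · rw [snake_zero] at hx
    omega
  · have := one_le_snake_fst ht₀ ht
    omega

def stone (r k : ℕ) : ℤ × ℤ := if k ≤ 17 then seed k else snake r (k - 18)

variable {j k : ℕ}

theorem stone_of_le (hk : k ≤ 17) : stone r k = seed k := if_pos hk

theorem stone_of_gt (hk : 17 < k) : stone r k = snake r (k - 18) := if_neg (by omega)

theorem neighbourSum_ones_stone (hk : 2 ≤ k) (hk' : k ≤ 17) :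
    neighbourSum (ones r) (stone r) k = k := by
  have hsum : ∑ j ∈ Finset.Ico 2 k, (if Adj (stone r j) (seed k) then j else 0) =
      ∑ j ∈ Finset.Ico 2 k, (if Adj (seed j) (seed k) then j else 0) :=
    Finset.sum_congr rfl fun j hj => by rw [stone_of_le (by grind)]
  rw [neighbourSum, stone_of_le hk', filter_adj_ones (seed_fst_le k hk' hk), hsum]
  exact neighbourSum_seed k hk' hk

theorem stone_ne (hj : 2 ≤ j) (hjk : j < k) (hk : k ≤ 6 * r + 18) : stone r j ≠ stone r k := by
  by_cases hk' : k ≤ 17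
  · rw [stone_of_le hk', stone_of_le (by omega)]
    exact seed_ne k hk' j hjk hj
  rw [stone_of_gt (k := k) (by omega)]
  by_cases hj' : j ≤ 17
  · rw [stone_of_le hj']
    exact seed_ne_snake hj hj' (by omega)
  · rw [stone_of_gt (by omega)]
    exact snake_ne (by omega)

theorem stone_not_mem_ones (hk : 2 ≤ k) (hk' : k ≤ 6 * r + 18) : stone r k ∉ ones r := by
  by_cases hk₁₇ : k ≤ 17
  · rw [stone_of_le hk₁₇]
    exact fun h => seed_not_mem k hk₁₇ hk
      (mem_seedOnes_of_mem_ones h ((seed_fst_le k hk₁₇ hk).trans (by norm_num)))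
  · rw [stone_of_gt (by omega)]
    exact snake_not_mem_ones (by omega)

theorem existsUnique_adj_stone (hk : 17 < k) (hk' : k ≤ 6 * r + 18) :
    ∃! c, c ∈ ones r ∧ Adj c (stone r k) := by
  rw [stone_of_gt hk]
  exact existsUnique_adj_snake (by omega)

theorem adj_stone_iff (hj : 2 ≤ j) (hjk : j < k) (hk : 17 < k) (hk' : k ≤ 6 * r + 18) :
    Adj (stone r j) (stone r k) ↔ j + 1 = k := by
  rw [stone_of_gt hk]
  by_cases hj' : j ≤ 17
  · rw [stone_of_le hj', adj_seed_snake_iff hj hj' (by omega)]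
    omega
  · rw [stone_of_gt (by omega), adj_snake_iff (by omega)]
    omega

theorem isPlacement_add_four (r : ℕ) : IsPlacement (r + 4) (6 * r + 18) := by
  rw [← card_ones r]
  exact isPlacement_card_of_chain (m₀ := 17) (by norm_num)
    (fun _ _ hj hjk hk => stone_ne hj hjk hk) (fun _ hk hk' => stone_not_mem_ones hk hk')
    (fun _ hk hk' => neighbourSum_ones_stone hk hk') (fun _ hk hk' => existsUnique_adj_stone hk hk')
    (fun _ _ hj hjk hk hk' => adj_stone_iff hj hjk hk hk')

end SteppingStones

open SteppingStones in
/-- For every `n ≥ 3` the Stepping Stones number satisfies `a(n) ≥ 6(n-1)`: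
an `(n, 6(n-1))`-placement exists. -/
theorem steppingStones_ge_six_mul (n : ℕ) (hn : 3 ≤ n) :
    IsPlacement n (6 * (n - 1)) := by
  obtain rfl | hn := hn.eq_or_lt
  · exact isPlacement_three_seventeen.mono (by norm_num)
  · obtain ⟨r, rfl⟩ : ∃ r, n = r + 4 := ⟨n - 4, by omega⟩
    rw [show 6 * (r + 4 - 1) = 6 * r + 18 by omega]
    exact isPlacement_add_four r
end
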